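/- Let d ≥ 2 be an integer and let x be a real number such that the forward orbit {r_d^{∘n}(x) : n ≥ 0} of x under iteration of r_d is a bounded subset of ℝ. Then 0 < x < d + 7. (In particular, the real points of the filled Julia set of r_d are contained in the open interval (0, d+7).) -/

import Mathlib

/-- The real polynomial `c_d`: for `d = 2j`,
`c_{2j}(x) = (1/(2j)!) ∏_{i=1}^{j} (x² − ((2i−1)/2)²)`, and for `d = 2j+1`,
`c_{2j+1}(x) = (1/(2j+1)!) x ∏_{i=1}^{j} (x² − i²)`. -/
noncomputable def c (d : ℕ) (x : ℝ) : ℝ :=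
  if d % 2 = 0 then
    (1 / (d.factorial : ℝ)) * ∏ i ∈ Finset.Icc 1 (d / 2), (x ^ 2 - ((2 * (i : ℝ) - 1) / 2) ^ 2)
  else
    (1 / (d.factorial : ℝ)) * x * ∏ i ∈ Finset.Icc 1 (d / 2), (x ^ 2 - (i : ℝ) ^ 2)

/-- The real polynomial `s_d`: `s_{2k}(x) = Σ_{j=0}^{k} (−1)^{k−j} c_{2j}(x)` and
`s_{2k+1}(x) = Σ_{j=0}^{k} (−1)^{k−j} c_{2j+1}(x)`. -/
noncomputable def s (d : ℕ) (x : ℝ) : ℝ :=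
  ∑ j ∈ Finset.range (d / 2 + 1), (-1 : ℝ) ^ (d / 2 - j) * c (2 * j + d % 2) x

noncomputable def dsc (d : ℕ) (v : ℝ) : ℝ := Polynomial.eval v (descPochhammer ℝ d)

lemma dsc_zero (v : ℝ) : dsc 0 v = 1 := by simp [dsc]

lemma dsc_succ_right (d : ℕ) (v : ℝ) : dsc (d+1) v = dsc d v * (v - d) := by
  simpa [dsc] using descPochhammer_succ_eval (S := ℝ) d v

lemma dsc_succ_left (d : ℕ) (v : ℝ) : dsc (d+1) v = v * dsc d (v - 1) := by
  simp [dsc, descPochhammer_succ_left, Polynomial.eval_comp]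

lemma dsc_prod (d : ℕ) (v : ℝ) : dsc d v = ∏ i ∈ Finset.range d, (v - i) := by
  induction d with
  | zero => simp [dsc_zero]
  | succ n ih => rw [dsc_succ_right, ih, Finset.prod_range_succ]

lemma fact_cast_pos (d : ℕ) : (0:ℝ) < (Nat.factorial d : ℝ) := by
  exact_mod_cast Nat.factorial_pos d

/-- bridge, even case -/
lemma c_even_dsc (j : ℕ) (x : ℝ) :
    c (2*j) x = dsc (2*j) (x + ((2*j : ℝ) - 1)/2) / (Nat.factorial (2*j)) := by
  induction j with
  | zero => simp [c, dsc_zero]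
  | succ n ih =>
    have h2 : (2*(n+1)) % 2 = 0 := by omega
    have h3 : (2*(n+1)) / 2 = n + 1 := by omega
    have h4 : (2*n) % 2 = 0 := by omega
    have h5 : (2*n) / 2 = n := by omega
    have hstep : dsc (2*(n+1)) (x + ((2*(n+1) : ℝ) - 1)/2)
        = (x ^ 2 - ((2*((n:ℝ)+1) - 1)/2) ^ 2) * dsc (2*n) (x + ((2*n : ℝ) - 1)/2) := by
      rw [show 2 * (n+1) = (2*n) + 1 + 1 by ring, dsc_succ_left, dsc_succ_right]
      push_cast
      ring_nf
    have hfac : (Nat.factorial (2*(n+1)) : ℝ)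
        = (2*(n:ℝ)+2) * (2*(n:ℝ)+1) * (Nat.factorial (2*n) : ℝ) := by
      rw [show 2*(n+1) = (2*n+1)+1 by ring, Nat.factorial_succ, Nat.factorial_succ]
      push_cast; ring
    unfold c at ih ⊢
    rw [if_pos h2, if_pos h4] at *
    simp only [show (2*(n+1))/2 = n+1 from by omega, show (2*n)/2 = n from by omega] at ih ⊢
    rw [Finset.prod_Icc_succ_top (by omega : 1 ≤ n + 1)]
    have hne : (Nat.factorial (2*n) : ℝ) ≠ 0 := ne_of_gt (fact_cast_pos _)
    have hP : (∏ k ∈ Finset.Icc 1 n, (x^2 - ((2*(k:ℝ)-1)/2)^2)) = dsc (2*n) (x + (2*(n:ℝ)-1)/2) := by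
      have h := ih
      rw [one_div, inv_mul_eq_div, div_eq_div_iff hne hne] at h
      exact mul_right_cancel₀ hne h
    have hne2 : (Nat.factorial (2*(n+1)) : ℝ) ≠ 0 := ne_of_gt (fact_cast_pos _)
    push_cast at hstep ⊢
    rw [hstep, ← hP]
    field_simp

/-- bridge, odd case -/
lemma c_odd_dsc (j : ℕ) (x : ℝ) :
    c (2*j+1) x = dsc (2*j+1) (x + ((2*j+1 : ℝ) - 1)/2) / (Nat.factorial (2*j+1)) := by
  induction j with
  | zero => simp [c, dsc, Nat.factorial]
  | succ n ih =>
    have h2 : (2*(n+1)+1) % 2 = 1 := by omega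
    have h3 : (2*(n+1)+1) / 2 = n + 1 := by omega
    have h4 : (2*n+1) % 2 = 1 := by omega
    have h5 : (2*n+1) / 2 = n := by omega
    have hstep : dsc (2*(n+1)+1) (x + ((2*(n+1)+1 : ℝ) - 1)/2)
        = (x ^ 2 - ((n:ℝ)+1) ^ 2) * dsc (2*n+1) (x + ((2*n+1 : ℝ) - 1)/2) := by
      rw [show 2*(n+1)+1 = (2*n+1) + 1 + 1 by ring, dsc_succ_left, dsc_succ_right]
      push_cast
      ring_nf
    have hfac : (Nat.factorial (2*(n+1)+1) : ℝ)
        = (2*(n:ℝ)+3) * (2*(n:ℝ)+2) * (Nat.factorial (2*n+1) : ℝ) := by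
      rw [show 2*(n+1)+1 = ((2*n+1)+1)+1 by ring, Nat.factorial_succ, Nat.factorial_succ]
      push_cast; ring
    unfold c at ih ⊢
    rw [if_neg (show ¬((2*(n+1)+1)%2 = 0) from by omega), h3]
    rw [if_neg (show ¬((2*n+1)%2 = 0) from by omega), h5] at ih
    rw [Finset.prod_Icc_succ_top (by omega : 1 ≤ n + 1)]
    have hne : (Nat.factorial (2*n+1) : ℝ) ≠ 0 := ne_of_gt (fact_cast_pos _)
    have hP : x * (∏ k ∈ Finset.Icc 1 n, (x^2 - (k:ℝ)^2)) = dsc (2*n+1) (x + ((2*n+1:ℝ)-1)/2) := by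
      have h := ih
      rw [one_div, mul_assoc, inv_mul_eq_div, div_eq_div_iff hne hne] at h
      exact mul_right_cancel₀ hne h
    have hne2 : (Nat.factorial (2*(n+1)+1) : ℝ) ≠ 0 := ne_of_gt (fact_cast_pos _)
    push_cast at hstep hP ⊢
    rw [hstep, ← hP]
    field_simp

/-- bridge -/
lemma c_dsc (d : ℕ) (x : ℝ) :
    c d x = dsc d (x + ((d : ℝ) - 1)/2) / (Nat.factorial d) := by
  rcases Nat.even_or_odd d with ⟨k, hk⟩ | ⟨k, hk⟩
  · have : d = 2*k := by omega
    subst this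
    rw [c_even_dsc k x]
    push_cast
    ring_nf
  · have : d = 2*k+1 := by omega
    subst this
    rw [c_odd_dsc k x]
    push_cast
    ring_nf

lemma c_pascal (d : ℕ) (x : ℝ) :
    c (d+1) (x + 1/2) - c (d+1) (x - 1/2) = c d x := by
  have hv : (x + 1/2) + ((d+1 : ℝ) - 1)/2 = (x + ((d:ℝ)-1)/2) + 1 := by push_cast; ring
  have hv' : (x - 1/2) + ((d+1 : ℝ) - 1)/2 = x + ((d:ℝ)-1)/2 := by push_cast; ring
  set v : ℝ := x + ((d:ℝ)-1)/2 with hvdef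
  have h1 : dsc (d+1) (v+1) = (v+1) * dsc d v := by
    rw [dsc_succ_left]; ring_nf
  have h2 : dsc (d+1) v = dsc d v * (v - d) := dsc_succ_right d v
  have hfac : (Nat.factorial (d+1) : ℝ) = ((d:ℝ)+1) * (Nat.factorial d : ℝ) := by
    rw [Nat.factorial_succ]; push_cast; ring
  rw [c_dsc (d+1) (x+1/2), c_dsc (d+1) (x-1/2), c_dsc d x]
  push_cast
  rw [hv, hv', h1, h2, hfac]
  have hne : (Nat.factorial d : ℝ) ≠ 0 := ne_of_gt (fact_cast_pos _)
  field_simp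
  rw [hvdef]; ring

lemma c_ratio (d : ℕ) (x : ℝ) :
    c (d+2) x = c d x * (x^2 - (((d:ℝ)+1)/2)^2) / (((d:ℝ)+1)*((d:ℝ)+2)) := by
  have hstep : dsc (d+2) (x + ((d+2 : ℝ) - 1)/2)
      = (x^2 - (((d:ℝ)+1)/2)^2) * dsc d (x + ((d:ℝ)-1)/2) := by
    rw [show d+2 = d+1+1 by ring, dsc_succ_left, dsc_succ_right]
    push_cast; ring_nf
  have hfac : (Nat.factorial (d+2) : ℝ) = ((d:ℝ)+2) * ((d:ℝ)+1) * (Nat.factorial d : ℝ) := by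
    rw [show d+2 = (d+1)+1 by ring, Nat.factorial_succ, Nat.factorial_succ]
    push_cast; ring
  rw [c_dsc (d+2) x, c_dsc d x]
  push_cast
  push_cast at hstep
  rw [hstep, hfac]
  have hne : (Nat.factorial d : ℝ) ≠ 0 := ne_of_gt (fact_cast_pos _)
  have h1 : (d:ℝ)+1 > 0 := by positivity
  have h2 : (d:ℝ)+2 > 0 := by positivity
  field_simp

lemma s_rec (d : ℕ) (x : ℝ) : s (d+2) x = c (d+2) x - s d x := by
  unfold s
  have h1 : (d+2)/2 = d/2 + 1 := by omega
  have h2 : (d+2) % 2 = d % 2 := by omega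
  rw [h1, h2, Finset.sum_range_succ]
  have h3 : 2 * (d/2 + 1) + d % 2 = d + 2 := by omega
  rw [h3, Nat.sub_self, pow_zero, one_mul]
  have h4 : ∀ j ∈ Finset.range (d/2 + 1), (-1:ℝ)^(d/2 + 1 - j) * c (2*j + d%2) x
      = -((-1:ℝ)^(d/2 - j) * c (2*j + d%2) x) := by
    intro j hj
    simp only [Finset.mem_range] at hj
    have : d/2 + 1 - j = (d/2 - j) + 1 := by omega
    rw [this, pow_succ]
    ring
  rw [Finset.sum_congr rfl h4, Finset.sum_neg_distrib]
  ring

lemma s_step (d : ℕ) (x : ℝ) :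
    s (d+1) (x + 1/2) - s (d+1) (x - 1/2) = s d x := by
  rcases Nat.even_or_odd d with ⟨k, hk⟩ | ⟨k, hk⟩
  · -- d = 2k, d+1 = 2k+1 odd
    have hd : d = 2*k := by omega
    subst hd
    unfold s
    have h1 : (2*k+1)/2 = k := by omega
    have h2 : (2*k+1)%2 = 1 := by omega
    have h3 : (2*k)/2 = k := by omega
    have h4 : (2*k)%2 = 0 := by omega
    simp only [h1, h2, h3, h4]
    rw [← Finset.sum_sub_distrib]
    apply Finset.sum_congr rfl
    intro j hj
    have := c_pascal (2*j) x
    have e : 2*j + 1 = (2*j) + 1 := rfl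
    rw [e]
    rw [show 2*j + 0 = 2*j from by omega]
    linear_combination ((-1:ℝ)^(k-j)) * this
  · -- d = 2k+1, d+1 = 2k+2 even
    have hd : d = 2*k+1 := by omega
    subst hd
    unfold s
    have h1 : (2*k+1+1)/2 = k+1 := by omega
    have h2 : (2*k+1+1)%2 = 0 := by omega
    have h3 : (2*k+1)/2 = k := by omega
    have h4 : (2*k+1)%2 = 1 := by omega
    simp only [h1, h2, h3, h4]
    rw [← Finset.sum_sub_distrib]
    rw [Finset.sum_range_succ']
    have hzero : (-1:ℝ)^(k+1-0) * c (2*0 + 0) (x+1/2) - (-1:ℝ)^(k+1-0) * c (2*0+0) (x-1/2) = 0 := by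
      have : ∀ y : ℝ, c 0 y = 1 := by intro y; simp [c]
      rw [show 2*0+0 = 0 from rfl, this, this]
      ring
    rw [hzero, add_zero]
    apply Finset.sum_congr rfl
    intro j hj
    simp only [Finset.mem_range] at hj
    have hp := c_pascal (2*j+1) x
    have e1 : 2*(j+1) + 0 = (2*j+1) + 1 := by omega
    have e2 : k + 1 - (j+1) = k - j := by omega
    rw [e1, e2]
    linear_combination ((-1:ℝ)^(k-j)) * hp

lemma s_zero (x : ℝ) : s 0 x = 1 := by simp [s, c]

lemma s_one (x : ℝ) : s 1 x = x := by
  unfold s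
  norm_num [c]

lemma s_tri : ∀ d : ℕ, ∀ x : ℝ,
    s d (x + 3/2) + s d (x - 3/2) = c d (x + 1/2) + c d (x - 1/2) := by
  intro d
  induction d using Nat.strong_induction_on with
  | _ d ih =>
    match d with
    | 0 => intro x; rw [s_zero, s_zero]; simp [c]
    | 1 => intro x
           rw [s_one, s_one]
           have : ∀ y : ℝ, c 1 y = y := by intro y; simp [c, Nat.factorial]
           rw [this, this]; ring
    | (e+2) =>
      intro x
      have hrec1 := s_rec e (x + 3/2)
      have hrec2 := s_rec e (x - 3/2)
      have hih := ih e (by omega) x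
      -- c identity: c_{e+2}(x+3/2) + c_{e+2}(x-3/2) - c_{e+2}(x+1/2) - c_{e+2}(x-1/2)
      --   = c_e(x+1/2) + c_e(x-1/2)
      have p1 := c_pascal (e+1) (x+1)   -- c_{e+2}(x+3/2) - c_{e+2}(x+1/2) = c_{e+1}(x+1)
      have p2 := c_pascal (e+1) (x-1)   -- c_{e+2}(x-1/2) - c_{e+2}(x-3/2) = c_{e+1}(x-1)
      have p3 := c_pascal e (x+1/2)     -- c_{e+1}(x+1) - c_{e+1}(x) = c_e(x+1/2)
      have p4 := c_pascal e (x-1/2)     -- c_{e+1}(x) - c_{e+1}(x-1) = c_e(x-1/2)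
      have e1 : x + 1 + 1/2 = x + 3/2 := by ring
      have e2 : x + 1 - 1/2 = x + 1/2 := by ring
      have e3 : x - 1 + 1/2 = x - 1/2 := by ring
      have e4 : x - 1 - 1/2 = x - 3/2 := by ring
      have e5 : x + 1/2 + 1/2 = x + 1 := by ring
      have e6 : x + 1/2 - 1/2 = x := by ring
      have e7 : x - 1/2 + 1/2 = x := by ring
      have e8 : x - 1/2 - 1/2 = x - 1 := by ring
      rw [e1, e2] at p1
      rw [e3, e4] at p2
      rw [e5, e6] at p3
      rw [e7, e8] at p4
      rw [hrec1, hrec2]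
      linarith [hih, p1, p2, p3, p4]

lemma c_neg (d : ℕ) (x : ℝ) : c d (-x) = (-1)^d * c d x := by
  unfold c
  rcases Nat.even_or_odd d with he | ho
  · rw [if_pos (Nat.even_iff.mp he), if_pos (Nat.even_iff.mp he), he.neg_one_pow]
    simp [neg_sq]
  · rw [if_neg (show ¬(d % 2 = 0) by rw [Nat.odd_iff] at ho; omega), if_neg (show ¬(d % 2 = 0) by rw [Nat.odd_iff] at ho; omega),
      ho.neg_one_pow]
    simp [neg_sq]

lemma s_neg (d : ℕ) (x : ℝ) : s d (-x) = (-1)^d * s d x := by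
  unfold s
  rw [Finset.mul_sum]
  apply Finset.sum_congr rfl
  intro j hj
  rw [c_neg]
  have h1 : (-1:ℝ)^(2*j + d%2) = (-1:ℝ)^(d%2) := by
    rw [pow_add]
    have : (-1:ℝ)^(2*j) = 1 := (even_two_mul j).neg_one_pow
    rw [this, one_mul]
  have h2 : (-1:ℝ)^(d%2) = (-1:ℝ)^d := by
    rcases Nat.even_or_odd d with he | ho
    · rw [he.neg_one_pow, Nat.even_iff.mp he]
      norm_num
    · rw [ho.neg_one_pow, Nat.odd_iff.mp ho]
      norm_num
  rw [h1, h2]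
  ring

lemma dsc_abs_le : ∀ d : ℕ, ∀ v : ℝ, -1 ≤ v → v ≤ d → |dsc d v| ≤ Nat.factorial d := by
  intro d
  induction d with
  | zero => intro v _ _; simp [dsc_zero]
  | succ n ih =>
    intro v h0 h1
    by_cases hc : v ≤ n
    · rw [dsc_succ_right, abs_mul]
      have hb := ih v h0 hc
      have : |v - (n:ℝ)| ≤ (n:ℝ) + 1 := by
        rw [abs_le]; constructor <;> nlinarith
      calc |dsc n v| * |v - (n:ℝ)| ≤ (Nat.factorial n) * ((n:ℝ)+1) := by
            apply mul_le_mul hb this (abs_nonneg _) (by positivity)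
        _ = (Nat.factorial (n+1) : ℝ) := by rw [Nat.factorial_succ]; push_cast; ring
    · push_neg at hc
      rw [dsc_succ_left, abs_mul]
      have h0' : -1 ≤ v - 1 := by
        have : (0:ℝ) ≤ n := Nat.cast_nonneg n
        nlinarith
      have h1' : v - 1 ≤ n := by push_cast at h1 ⊢; linarith
      have hb := ih (v-1) h0' h1'
      have hv : |v| ≤ (n:ℝ) + 1 := by
        rw [abs_le]; push_cast at h1; constructor <;> nlinarith [Nat.cast_nonneg (α := ℝ) n]
      calc |v| * |dsc n (v-1)| ≤ ((n:ℝ)+1) * (Nat.factorial n) := by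
            apply mul_le_mul hv hb (abs_nonneg _) (by positivity)
        _ = (Nat.factorial (n+1) : ℝ) := by rw [Nat.factorial_succ]; push_cast; ring

lemma c_abs_le_one (d : ℕ) (x : ℝ) (h0 : -1 ≤ x + ((d:ℝ)-1)/2) (h1 : x + ((d:ℝ)-1)/2 ≤ d) :
    |c d x| ≤ 1 := by
  rw [c_dsc, abs_div, abs_of_pos (fact_cast_pos d)]
  rw [div_le_one (fact_cast_pos d)]
  exact dsc_abs_le d _ h0 h1

lemma prod_lower : ∀ d a : ℕ,
    ∏ i ∈ Finset.range d, ((d:ℝ) + a - i) = (Nat.factorial (d + a) : ℝ) / (Nat.factorial a : ℝ) := by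
  intro d
  induction d with
  | zero =>
    intro a
    simp [div_self (ne_of_gt (fact_cast_pos a))]
  | succ n ih =>
    intro a
    rw [Finset.prod_range_succ']
    push_cast
    have h2 : (∏ i ∈ Finset.range n, ((n:ℝ) + 1 + (a:ℝ) - ((i:ℝ) + 1)))
        = ∏ i ∈ Finset.range n, ((n:ℝ) + (a:ℝ) - (i:ℝ)) := by
      apply Finset.prod_congr rfl; intro i _; ring
    rw [h2, ih a]
    have hfac : (Nat.factorial (n + 1 + a) : ℝ) = ((n:ℝ)+1+a) * (Nat.factorial (n+a) : ℝ) := by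
      rw [show n+1+a = (n+a)+1 by ring, Nat.factorial_succ]
      push_cast; ring
    rw [hfac]
    field_simp
    ring

lemma dsc_ge (d a : ℕ) (v : ℝ) (h : (d:ℝ) + a ≤ v) :
    (Nat.factorial (d+a) : ℝ)/(Nat.factorial a : ℝ) ≤ dsc d v := by
  rw [dsc_prod, ← prod_lower]
  apply Finset.prod_le_prod
  · intro i hi
    simp only [Finset.mem_range] at hi
    have : (i:ℝ) < d := by exact_mod_cast hi
    have : (0:ℝ) ≤ a := Nat.cast_nonneg a
    nlinarith
  · intro i hi
    linarith

lemma c_ge2 (d : ℕ) (w : ℝ) (h : ((d:ℝ)+5)/2 ≤ w) :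
    ((d:ℝ)+1)*((d:ℝ)+2)/2 ≤ c d w := by
  have h1 := dsc_ge d 2 (w + ((d:ℝ)-1)/2) (by push_cast; linarith)
  rw [c_dsc]
  rw [le_div_iff₀ (fact_cast_pos d)]
  have hfac : (Nat.factorial (d+2) : ℝ) = ((d:ℝ)+2)*((d:ℝ)+1)*(Nat.factorial d : ℝ) := by
    rw [show d+2 = (d+1)+1 by ring, Nat.factorial_succ, Nat.factorial_succ]; push_cast; ring
  have h2 : (Nat.factorial 2 : ℝ) = 2 := by norm_num [Nat.factorial]
  rw [hfac, h2] at h1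
  have := fact_cast_pos d
  nlinarith [h1]

lemma c_ge1 (d : ℕ) (w : ℝ) (h : ((d:ℝ)+3)/2 ≤ w) :
    (d:ℝ)+1 ≤ c d w := by
  have h1 := dsc_ge d 1 (w + ((d:ℝ)-1)/2) (by push_cast; linarith)
  rw [c_dsc]
  rw [le_div_iff₀ (fact_cast_pos d)]
  have hfac : (Nat.factorial (d+1) : ℝ) = ((d:ℝ)+1)*(Nat.factorial d : ℝ) := by
    rw [Nat.factorial_succ]; push_cast; ring
  have h2 : (Nat.factorial 1 : ℝ) = 1 := by norm_num [Nat.factorial]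
  rw [hfac, h2] at h1
  have := fact_cast_pos d
  nlinarith [h1]

lemma c_two (y : ℝ) : c 2 y = (y^2 - 1/4)/2 := by
  unfold c
  norm_num [Finset.Icc_self, Nat.factorial]
  ring

lemma c_three (y : ℝ) : c 3 y = y*(y^2-1)/6 := by
  unfold c
  norm_num [Finset.Icc_self, Nat.factorial]
  ring

lemma s_two (y : ℝ) : s 2 y = (y^2-1/4)/2 - 1 := by
  have := s_rec 0 y
  rw [s_zero] at this
  rw [this, c_two]

lemma s_three (y : ℝ) : s 3 y = y*(y^2-1)/6 - y := by
  have := s_rec 1 y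
  rw [s_one] at this
  rw [this, c_three]

lemma c_four (y : ℝ) : c 4 y = ((y^2-1/4)/2) * (y^2 - 9/4) / 12 := by
  have := c_ratio 2 y
  rw [c_two] at this
  rw [this]
  norm_num

lemma c_five (y : ℝ) : c 5 y = (y*(y^2-1)/6) * (y^2 - 4) / 20 := by
  have := c_ratio 3 y
  rw [c_three] at this
  rw [this]
  norm_num

lemma s_four (y : ℝ) : s 4 y = ((y^2-1/4)/2) * (y^2 - 9/4) / 12 - ((y^2-1/4)/2 - 1) := by
  have := s_rec 2 y
  rw [s_two, c_four] at this
  rw [this]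

lemma s_five (y : ℝ) : s 5 y = (y*(y^2-1)/6) * (y^2 - 4) / 20 - (y*(y^2-1)/6 - y) := by
  have := s_rec 3 y
  rw [s_three, c_five] at this
  rw [this]

lemma c_small : ∀ d : ℕ, 4 ≤ d → ∀ y : ℝ, |y| ≤ 3/2 → |c d y| ≤ 6 * ((2:ℝ)⁻¹)^d := by
  intro d
  induction d using Nat.strong_induction_on with
  | _ d ih =>
    match d with
    | 0 | 1 | 2 | 3 => intro h; omega
    | 4 =>
      intro _ y hy
      have hc : c 4 y = (y^2-1/4)*(y^2-9/4)/24 := by rw [c_four]; ring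
      have h2 : y^2 ≤ 9/4 := by nlinarith [abs_le.mp hy]
      have h0 : 0 ≤ y^2 := sq_nonneg y
      have hA : |y^2-1/4| ≤ 2 := by rw [abs_le]; constructor <;> nlinarith
      have hB : |y^2-9/4| ≤ 9/4 := by rw [abs_le]; constructor <;> nlinarith
      have h : |(y^2-1/4)*(y^2-9/4)| ≤ 2*(9/4) := by
        rw [abs_mul]
        exact mul_le_mul hA hB (abs_nonneg _) (by norm_num)
      calc |c 4 y| = |(y^2-1/4)*(y^2-9/4)|/24 := by rw [hc, abs_div]; norm_num
        _ ≤ (2*(9/4))/24 := by gcongr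
        _ ≤ 6*((2:ℝ)⁻¹)^4 := by norm_num
    | 5 =>
      intro _ y hy
      have hc : c 5 y = y*(y^2-1)*(y^2-4)/120 := by rw [c_five]; ring
      have h2 : y^2 ≤ 9/4 := by nlinarith [abs_le.mp hy]
      have h0 : 0 ≤ y^2 := sq_nonneg y
      have hA : |y^2-1| ≤ 5/4 := by rw [abs_le]; constructor <;> nlinarith
      have hB : |y^2-4| ≤ 4 := by rw [abs_le]; constructor <;> nlinarith
      have h : |y*(y^2-1)*(y^2-4)| ≤ (3/2)*(5/4)*4 := by
        rw [abs_mul, abs_mul]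
        apply mul_le_mul _ hB (abs_nonneg _) (by norm_num)
        exact mul_le_mul hy hA (abs_nonneg _) (by norm_num)
      calc |c 5 y| = |y*(y^2-1)*(y^2-4)|/120 := by rw [hc, abs_div]; norm_num
        _ ≤ ((3/2)*(5/4)*4)/120 := by gcongr
        _ ≤ 6*((2:ℝ)⁻¹)^5 := by norm_num
    | (e+6) =>
      intro _ y hy
      have hf4 : 4 ≤ e+4 := by omega
      have ihf := ih (e+4) (by omega) hf4 y hy
      have hr := c_ratio (e+4) y
      have h2 : y^2 ≤ 9/4 := by nlinarith [abs_le.mp hy]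
      have h0 : 0 ≤ y^2 := sq_nonneg y
      set g : ℝ := ((e+4 : ℕ):ℝ) with hg
      have hg0 : 0 ≤ g := Nat.cast_nonneg _
      have hge : (4:ℝ) ≤ g := by rw [hg]; exact_mod_cast hf4
      have hfr : (0:ℝ) < (g+1)*(g+2) := by positivity
      have hnum : |y^2 - ((g+1)/2)^2| ≤ ((g+1)/2)^2 := by
        rw [abs_le]; constructor <;> nlinarith
      have hstep : |c (e+6) y| ≤ |c (e+4) y| * (((g+1)/2)^2) / ((g+1)*(g+2)) := by
        rw [show e+6 = (e+4)+2 by ring] at *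
        rw [hr, abs_div, abs_mul, abs_of_pos hfr]
        gcongr
      have hq : (((g+1)/2)^2) / ((g+1)*(g+2)) ≤ 1/4 := by
        rw [div_le_iff₀ hfr]
        nlinarith
      have habs : (0:ℝ) ≤ |c (e+4) y| := abs_nonneg _
      calc |c (e+6) y| ≤ |c (e+4) y| * (((g+1)/2)^2) / ((g+1)*(g+2)) := hstep
        _ = |c (e+4) y| * ((((g+1)/2)^2) / ((g+1)*(g+2))) := by ring
        _ ≤ (6 * ((2:ℝ)⁻¹)^(e+4)) * (1/4) := by
            apply mul_le_mul ihf hq (by positivity) (by positivity)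
        _ = 6 * ((2:ℝ)⁻¹)^(e+6) := by
            rw [show e+6 = (e+4)+2 by ring, pow_add]
            ring

lemma s_center : ∀ d : ℕ, 2 ≤ d → ∀ y : ℝ, |y| ≤ 3/2 → |s d y| ≤ 2 - 3*((2:ℝ)⁻¹)^d := by
  intro d
  induction d using Nat.strong_induction_on with
  | _ d ih =>
    match d with
    | 0 | 1 => intro h; omega
    | 2 =>
      intro _ y hy
      rw [s_two]
      have h2 : y^2 ≤ 9/4 := by nlinarith [abs_le.mp hy]
      have h0 : 0 ≤ y^2 := sq_nonneg y
      rw [abs_le]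
      norm_num
      constructor <;> nlinarith
    | 3 =>
      intro _ y hy
      rw [s_three]
      have hy' := abs_le.mp hy
      have h2 : y^2 ≤ 9/4 := by nlinarith [hy'.1, hy'.2]
      rw [abs_le]
      norm_num
      constructor <;> nlinarith [hy'.1, hy'.2, sq_nonneg y, sq_nonneg (y-3/2), sq_nonneg (y+3/2), sq_nonneg (y-1), sq_nonneg (y+1)]
    | (e+4) =>
      intro _ y hy
      have h1 : |s (e+2) y| ≤ 2 - 3*((2:ℝ)⁻¹)^(e+2) := ih (e+2) (by omega) (by omega) y hy
      have h2 : |c (e+4) y| ≤ 6*((2:ℝ)⁻¹)^(e+4) := c_small (e+4) (by omega) y hy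
      have h3 := s_rec (e+2) y
      rw [show e+4 = (e+2)+2 by ring]
      rw [h3]
      have h4 : |c ((e+2)+2) y - s (e+2) y| ≤ |c ((e+2)+2) y| + |s (e+2) y| := abs_sub _ _
      have hpow : ((2:ℝ)⁻¹)^(e+4) = ((2:ℝ)⁻¹)^(e+2) * (1/4) := by
        rw [show e+4 = (e+2)+2 by ring, pow_add]; norm_num
      have hpos : (0:ℝ) < ((2:ℝ)⁻¹)^(e+2) := by positivity
      calc |c ((e+2)+2) y - s (e+2) y| ≤ |c ((e+2)+2) y| + |s (e+2) y| := h4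
        _ ≤ 6*((2:ℝ)⁻¹)^(e+4) + (2 - 3*((2:ℝ)⁻¹)^(e+2)) := by
            have := h2
            rw [show (e+2)+2 = e+4 by ring]
            linarith
        _ ≤ 2 - 3*((2:ℝ)⁻¹)^((e+2)+2) := by
            rw [show (e+2)+2 = e+4 by ring, hpow]
            nlinarith [hpos]

lemma s_center' (d : ℕ) (hd : 2 ≤ d) (y : ℝ) (hy : |y| ≤ 3/2) : |s d y| ≤ 2 := by
  have := s_center d hd y hy
  have : (0:ℝ) < 3*((2:ℝ)⁻¹)^d := by positivity
  linarith [s_center d hd y hy]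

lemma s_mid (d : ℕ) (hd : 2 ≤ d) : ∀ n : ℕ, ∀ y : ℝ,
    -(3/2) ≤ y → y ≤ 3/2 + 3*n → y ≤ ((d:ℝ)+3)/2 → |s d y| ≤ 2 + 2*n := by
  intro n
  induction n with
  | zero =>
    intro y h1 h2 _
    norm_num at h2 ⊢
    exact s_center' d hd y (abs_le.mpr ⟨h1, h2⟩)
  | succ m ihm =>
    intro y h1 h2 h3
    by_cases hc : y ≤ 3/2 + 3*m
    · have := ihm y h1 hc h3
      have hm0 : (0:ℝ) ≤ 2 := by norm_num
      push_cast
      push_cast at this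
      linarith
    · push_neg at hc
      have htri := s_tri d (y - 3/2)
      have e1 : y - 3/2 + 3/2 = y := by ring
      have e2 : y - 3/2 - 3/2 = y - 3 := by ring
      have e3 : y - 3/2 + 1/2 = y - 1 := by ring
      have e4 : y - 3/2 - 1/2 = y - 2 := by ring
      rw [e1, e2, e3, e4] at htri
      -- |c d (y-1)| ≤ 1, |c d (y-2)| ≤ 1
      have hdr : (2:ℝ) ≤ (d:ℝ) := by exact_mod_cast hd
      have hb1 : |c d (y-1)| ≤ 1 := by
        apply c_abs_le_one <;> [skip; skip] <;> nlinarith [hc, h3, hdr]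
      have hb2 : |c d (y-2)| ≤ 1 := by
        apply c_abs_le_one <;> [skip; skip] <;> nlinarith [hc, h3, hdr]
      have hrec : |s d (y-3)| ≤ 2 + 2*m := by
        apply ihm (y-3)
        · linarith
        · push_cast at h2; linarith
        · linarith
      have : s d y = c d (y-1) + c d (y-2) - s d (y-3) := by linarith [htri]
      rw [this]
      push_cast
      calc |c d (y-1) + c d (y-2) - s d (y-3)|
          ≤ |c d (y-1)| + |c d (y-2)| + |s d (y-3)| := by
            have t1 := abs_add_le (c d (y-1)) (c d (y-2))
            have t2 := abs_sub (c d (y-1) + c d (y-2)) (s d (y-3))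
            linarith
        _ ≤ 1 + 1 + (2 + 2*m) := by linarith
        _ = 2 + 2*((m:ℝ)+1) := by ring

lemma s_window (d : ℕ) (hd : 6 ≤ d) (z : ℝ)
    (h1 : ((d:ℝ)+7)/2 ≤ z) (h2 : z ≤ ((d:ℝ)+7)/2 + 1) : 2*z + 3 ≤ s d z := by
  have hdr : (6:ℝ) ≤ (d:ℝ) := by exact_mod_cast hd
  have htri := s_tri d (z - 3/2)
  have e1 : z - 3/2 + 3/2 = z := by ring
  have e2 : z - 3/2 - 3/2 = z - 3 := by ring
  have e3 : z - 3/2 + 1/2 = z - 1 := by ring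
  have e4 : z - 3/2 - 1/2 = z - 2 := by ring
  rw [e1, e2, e3, e4] at htri
  have hc1 : ((d:ℝ)+1)*((d:ℝ)+2)/2 ≤ c d (z-1) := c_ge2 d (z-1) (by linarith)
  have hc2 : (d:ℝ)+1 ≤ c d (z-2) := c_ge1 d (z-2) (by linarith)
  have hmid : |s d (z-3)| ≤ 2 + 2*(d:ℝ) := by
    have := s_mid d (by omega) d (z-3) (by linarith) (by push_cast; linarith) (by linarith)
    push_cast at this
    linarith
  have habs := abs_le.mp hmid
  have : s d z = c d (z-1) + c d (z-2) - s d (z-3) := by linarith [htri]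
  rw [this]
  nlinarith [habs.2, hc1, hc2, hdr]

lemma s_main : ∀ d : ℕ, 3 ≤ d → ∀ z : ℝ, ((d:ℝ)+7)/2 ≤ z → 2*z + 3 ≤ s d z := by
  intro d
  induction d using Nat.strong_induction_on with
  | _ d ih =>
    match d with
    | 0 | 1 | 2 => intro h; omega
    | 3 =>
      intro _ z hz
      norm_num at hz
      rw [s_three]
      nlinarith [mul_nonneg (mul_nonneg (by linarith : (0:ℝ) ≤ z - 5) (by linarith : (0:ℝ) ≤ z + 2)) (by linarith : (0:ℝ) ≤ z + 3)]
    | 4 =>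
      intro _ z hz
      norm_num at hz
      rw [s_four]
      nlinarith [sq_nonneg z, sq_nonneg (z - 11/2), mul_nonneg (by linarith : (0:ℝ) ≤ z - 11/2) (sq_nonneg z), mul_nonneg (mul_nonneg (by linarith : (0:ℝ) ≤ z - 11/2) (by linarith : (0:ℝ) ≤ z - 11/2)) (sq_nonneg z)]
    | 5 =>
      intro _ z hz
      norm_num at hz
      rw [s_five]
      nlinarith [sq_nonneg z, mul_nonneg (by linarith : (0:ℝ) ≤ z - 6) (sq_nonneg z), mul_nonneg (mul_nonneg (by linarith : (0:ℝ) ≤ z - 6) (by linarith : (0:ℝ) ≤ z - 6)) (sq_nonneg z), mul_nonneg (mul_nonneg (mul_nonneg (by linarith : (0:ℝ) ≤ z - 6) (by linarith : (0:ℝ) ≤ z - 6)) (by linarith : (0:ℝ) ≤ z - 6)) (by linarith : (0:ℝ) ≤ z)]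
    | (e+6) =>
      intro _ z hz
      -- inner induction on number of unit steps above the window
      have key : ∀ n : ℕ, ∀ w : ℝ, (((e+6:ℕ):ℝ)+7)/2 ≤ w → w ≤ (((e+6:ℕ):ℝ)+7)/2 + 1 + n →
          2*w + 3 ≤ s (e+6) w := by
        intro n
        induction n with
        | zero =>
          intro w hw1 hw2
          exact s_window (e+6) (by omega) w hw1 (by push_cast at hw2 ⊢; linarith)
        | succ m ihm =>
          intro w hw1 hw2
          by_cases hc : w ≤ (((e+6:ℕ):ℝ)+7)/2 + 1 + m
          · exact ihm w hw1 hc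
          · push_neg at hc
            have hstep := s_step (e+5) (w - 1/2)
            have e1 : w - 1/2 + 1/2 = w := by ring
            have e2 : w - 1/2 - 1/2 = w - 1 := by ring
            rw [e1, e2] at hstep
            have h5 : 2*(w-1) + 3 ≤ s (e+6) (w-1) := by
              apply ihm (w-1)
              · push_cast at hw1 hc ⊢; linarith
              · push_cast at hw2 ⊢; linarith
            have h6 : 2*(w-1/2) + 3 ≤ s (e+5) (w-1/2) := by
              apply ih (e+5) (by omega) (by omega)
              push_cast at hw1 hc ⊢; linarith
            have hw0 : (0:ℝ) ≤ w := by
              have h7 : (0:ℝ) ≤ (e:ℝ) := Nat.cast_nonneg e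
              push_cast at hw1
              linarith
            have : s (e+6) w = s (e+6) (w-1) + s (e+5) (w-1/2) := by
              rw [show e+6 = (e+5)+1 by ring]
              linarith [hstep]
            rw [this]
            linarith
      obtain ⟨n, hn⟩ := exists_nat_gt (z - ((((e+6:ℕ):ℝ)+7)/2 + 1))
      exact key n z hz (by linarith)

/-- The polynomial `r_d` of Doyle–Hyde, as a real function. -/
noncomputable def r (d : ℕ) (x : ℝ) : ℝ :=
  if d % 2 = 0 then s d (x - 3 - ((d : ℝ) + 1) / 2) + 2
  else s d (x - 3 - ((d : ℝ) + 1) / 2) - x + (d : ℝ) + 6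


lemma esc_hi (d : ℕ) (hd : 2 ≤ d) (x : ℝ) (hx : (d:ℝ)+7 ≤ x) : x + 2 ≤ r d x := by
  by_cases h2 : d = 2
  · subst h2
    unfold r
    norm_num at hx ⊢
    rw [s_two]
    nlinarith [mul_nonneg (by linarith : (0:ℝ) ≤ x - 9) (by linarith : (0:ℝ) ≤ x - 2)]
  · have hd3 : 3 ≤ d := by omega
    have hdr : (3:ℝ) ≤ (d:ℝ) := by exact_mod_cast hd3
    have hmain := s_main d hd3 (x - 3 - ((d:ℝ)+1)/2) (by linarith)
    unfold r
    by_cases hp : d % 2 = 0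
    · rw [if_pos hp]; linarith
    · rw [if_neg hp]; linarith

lemma esc_lo_even (d : ℕ) (hd : 2 ≤ d) (hp : d % 2 = 0) (x : ℝ) (hx : x ≤ 0) :
    (d:ℝ)+7 ≤ r d x := by
  by_cases h2 : d = 2
  · subst h2
    unfold r
    norm_num
    rw [s_two]
    nlinarith [mul_nonneg (by linarith : (0:ℝ) ≤ -x) (by linarith : (0:ℝ) ≤ -x)]
  · have hd3 : 3 ≤ d := by omega
    have hdr : (3:ℝ) ≤ (d:ℝ) := by exact_mod_cast hd3
    have hneg : s d (x - 3 - ((d:ℝ)+1)/2) = s d (-(x - 3 - ((d:ℝ)+1)/2)) := by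
      have h := s_neg d (-(x - 3 - ((d:ℝ)+1)/2))
      rw [neg_neg] at h
      rw [h, Even.neg_one_pow (Nat.even_iff.mpr hp), one_mul]
    have hmain := s_main d hd3 (-(x - 3 - ((d:ℝ)+1)/2)) (by push_cast; linarith)
    unfold r
    rw [if_pos hp, hneg]
    linarith

lemma esc_lo_odd (d : ℕ) (hd : 2 ≤ d) (hp : d % 2 = 1) (x : ℝ) (hx : x ≤ 0) :
    r d x ≤ x - 2 := by
  have hd3 : 3 ≤ d := by omega
  have hdr : (3:ℝ) ≤ (d:ℝ) := by exact_mod_cast hd3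
  have hneg : s d (x - 3 - ((d:ℝ)+1)/2) = -(s d (-(x - 3 - ((d:ℝ)+1)/2))) := by
    have h := s_neg d (-(x - 3 - ((d:ℝ)+1)/2))
    rw [neg_neg, Odd.neg_one_pow (Nat.odd_iff.mpr hp)] at h
    linarith
  have hmain := s_main d hd3 (-(x - 3 - ((d:ℝ)+1)/2)) (by push_cast; linarith)
  unfold r
  rw [if_neg (by omega), hneg]
  linarith

lemma grow (d : ℕ) (hd : 2 ≤ d) (x0 : ℝ) (hx0 : (d:ℝ)+7 ≤ x0) :
    ∀ n : ℕ, (d:ℝ)+7 + 2*n ≤ (r d)^[n] x0 := by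
  intro n
  induction n with
  | zero => simpa using hx0
  | succ m ihm =>
    rw [Function.iterate_succ_apply']
    have h1 : (d:ℝ)+7 ≤ (r d)^[m] x0 := by
      have : (0:ℝ) ≤ 2*m := by positivity
      linarith
    have := esc_hi d hd ((r d)^[m] x0) h1
    push_cast
    linarith

lemma shrink (d : ℕ) (hd : 2 ≤ d) (hp : d % 2 = 1) (x0 : ℝ) (hx0 : x0 ≤ 0) :
    ∀ n : ℕ, (r d)^[n] x0 ≤ x0 - 2*n := by
  intro n
  induction n with
  | zero => simpa using le_refl x0
  | succ m ihm =>
    rw [Function.iterate_succ_apply']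
    have h1 : (r d)^[m] x0 ≤ 0 := by
      have : (0:ℝ) ≤ 2*m := by positivity
      linarith
    have := esc_lo_odd d hd hp ((r d)^[m] x0) h1
    push_cast
    linarith

/-- If the forward orbit of a real `x` under `r_d` is bounded (i.e. `x` lies in the real
points of the filled Julia set of `r_d`), then `0 < x < d + 7`. -/
theorem rd_real_filled_julia (d : ℕ) (hd : 2 ≤ d) (x : ℝ)
    (hb : ∃ M : ℝ, ∀ n : ℕ, |(r d)^[n] x| ≤ M) :
    0 < x ∧ x < (d : ℝ) + 7 := by
  obtain ⟨M, hM⟩ := hb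
  have hM0 : 0 ≤ M := le_trans (abs_nonneg _) (hM 0)
  by_contra hcon
  push_neg at hcon
  have hcase : x ≤ 0 ∨ (d:ℝ)+7 ≤ x := by
    by_cases h : 0 < x
    · right; exact hcon h
    · left; linarith
  have hup : ∀ x0 : ℝ, (d:ℝ)+7 ≤ x0 → (∀ n : ℕ, |(r d)^[n] x0| ≤ M) → False := by
    intro x0 hx0 hbnd
    obtain ⟨n, hn⟩ := exists_nat_gt M
    have hg := grow d hd x0 hx0 n
    have habs := (abs_le.mp (hbnd n)).2
    have hd0 : (0:ℝ) ≤ d := Nat.cast_nonneg d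
    have hnn : (0:ℝ) ≤ n := Nat.cast_nonneg n
    linarith
  rcases hcase with hneg | hbig
  · rcases Nat.even_or_odd d with he | ho
    · -- even: first step jumps to the right of d+7
      have h1 := esc_lo_even d hd (Nat.even_iff.mp he) x hneg
      apply hup (r d x) h1
      intro n
      rw [← Function.iterate_succ_apply]
      exact hM (n+1)
    · -- odd: orbit escapes to -infinity
      obtain ⟨n, hn⟩ := exists_nat_gt M
      have hs := shrink d hd (Nat.odd_iff.mp ho) x hneg n
      have habs := (abs_le.mp (hM n)).1
      have hnn : (0:ℝ) ≤ n := Nat.cast_nonneg n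
      linarith
  · exact hup x hbig hM
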